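/- For the l⁴-norm anisotropy γ(n) = (n₁⁴ + n₂⁴)^{1/4} on S¹, with ξ(n) = γ(n)⁻³(n₁³, n₂³)ᵀ and k₀(n) = 2γ(n)⁻³, the stability inequality γ(n)[(n̂^⊥)ᵀ Z_{k₀}(n) n̂^⊥] ≥ γ(n̂)² holds for all n, n̂ ∈ S¹; indeed γ(n)[(n̂^⊥)ᵀ Z_{k₀}(n) n̂^⊥] - γ(n̂)² ≥ (n₁n₂ - n̂₁n̂₂)²/√(n₁⁴ + n₂⁴). -/

import Mathlib

set_option maxHeartbeats 1000000


open Matrix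

/-- Clockwise rotation by π/2. -/
noncomputable def perp (v : Fin 2 → ℝ) : Fin 2 → ℝ := ![v 1, -v 0]

/-- The l⁴-norm anisotropy on the unit circle. -/
noncomputable def gam4 (n : Fin 2 → ℝ) : ℝ := (n 0 ^ 4 + n 1 ^ 4) ^ ((1 : ℝ) / 4)

/-- The Cahn-Hoffman vector for the l⁴-norm anisotropy. -/
noncomputable def xi4 (n : Fin 2 → ℝ) : Fin 2 → ℝ := (gam4 n ^ 3)⁻¹ • ![n 0 ^ 3, n 1 ^ 3]

/-- The surface energy matrix for the l⁴-norm anisotropy with k₀(n) = 2 γ(n)⁻³. -/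
noncomputable def Z4 (n : Fin 2 → ℝ) : Matrix (Fin 2) (Fin 2) ℝ :=
  gam4 n • (1 : Matrix (Fin 2) (Fin 2) ℝ) - vecMulVec n (xi4 n) - vecMulVec (xi4 n) n
    + (2 * (gam4 n ^ 3)⁻¹) • vecMulVec n n

/-- Stability inequality for the l⁴-norm anisotropy with the minimal stabilizing
function k₀(n) = 2 γ(n)⁻³. -/
theorem l4_stability (n m : Fin 2 → ℝ) (hn : n ⬝ᵥ n = 1) (hm : m ⬝ᵥ m = 1) :
    (n 0 * n 1 - m 0 * m 1) ^ 2 / Real.sqrt (n 0 ^ 4 + n 1 ^ 4) ≤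
      gam4 n * (perp m ⬝ᵥ (Z4 n).mulVec (perp m)) - gam4 m ^ 2 ∧
    gam4 m ^ 2 ≤ gam4 n * (perp m ⬝ᵥ (Z4 n).mulVec (perp m)) := by
  simp only [dotProduct, Fin.sum_univ_two] at hn hm
  set a := n 0; set b := n 1; set c := m 0; set d := m 1
  have hn' : a ^ 2 + b ^ 2 = 1 := by nlinarith
  have hm' : c ^ 2 + d ^ 2 = 1 := by nlinarith
  set S := a ^ 4 + b ^ 4 with hSdef
  set T := c ^ 4 + d ^ 4 with hTdef
  have hS : 0 < S := by nlinarith [sq_nonneg (a^2 - b^2)]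
  have hT : 0 < T := by nlinarith [sq_nonneg (c^2 - d^2)]
  have hgpos : 0 < gam4 n := Real.rpow_pos_of_pos hS _
  have hgne : gam4 n ≠ 0 := ne_of_gt hgpos
  have hg4 : gam4 n ^ 4 = S := by
    rw [gam4, ← Real.rpow_natCast (S ^ ((1:ℝ)/4)) 4, ← Real.rpow_mul hS.le]
    norm_num
  have hg2 : gam4 n ^ 2 = Real.sqrt S := by
    rw [show S = (gam4 n ^ 2) ^ 2 by rw [← hg4]; ring]
    exact (Real.sqrt_sq (by positivity)).symm
  have hm2 : gam4 m ^ 2 = Real.sqrt T := by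
    have hm4 : gam4 m ^ 4 = T := by
      rw [gam4, ← Real.rpow_natCast (T ^ ((1:ℝ)/4)) 4, ← Real.rpow_mul hT.le]
      norm_num
    rw [show T = (gam4 m ^ 2) ^ 2 by rw [← hm4]; ring]
    exact (Real.sqrt_sq (by positivity)).symm
  have hsS : 0 < Real.sqrt S := Real.sqrt_pos.mpr hS
  have hsS2 : Real.sqrt S ^ 2 = S := Real.sq_sqrt hS.le
  have hsT2 : Real.sqrt T ^ 2 = T := Real.sq_sqrt hT.le
  have hsT : 0 ≤ Real.sqrt T := Real.sqrt_nonneg _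
  have expand : perp m ⬝ᵥ (Z4 n).mulVec (perp m) =
      gam4 n * (c ^ 2 + d ^ 2)
        - 2 * (gam4 n ^ 3)⁻¹ * ((a * d - b * c) * (a ^ 3 * d - b ^ 3 * c))
        + 2 * (gam4 n ^ 3)⁻¹ * (a * d - b * c) ^ 2 := by
    simp [Z4, xi4, perp, Matrix.mulVec, dotProduct, vecMulVec, Fin.sum_univ_two,
      Matrix.one_apply, Matrix.smul_apply, Matrix.sub_apply, Matrix.add_apply]
    ring
  have key : gam4 n * (perp m ⬝ᵥ (Z4 n).mulVec (perp m)) =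
      (1 - 2 * (a * b * c * d)) / Real.sqrt S := by
    have hnum : gam4 n ^ 4 * (c ^ 2 + d ^ 2)
        - 2 * ((a * d - b * c) * (a ^ 3 * d - b ^ 3 * c)) + 2 * (a * d - b * c) ^ 2
        = 1 - 2 * (a * b * c * d) := by
      rw [hg4, hSdef]
      linear_combination (2*a*b*c*d + (a^2-b^2)*(c^2-d^2) + 1) * hn' + (a^2+b^2) * hm'
    rw [expand, ← hg2, ← hnum, eq_div_iff (pow_ne_zero 2 hgne)]
    field_simp
  have hS1 : S = 1 - 2 * a^2 * b^2 := by rw [hSdef]; linear_combination (a^2+b^2+1)*hn'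
  have hT1 : T = 1 - 2 * c^2 * d^2 := by rw [hTdef]; linear_combination (c^2+d^2+1)*hm'
  have hst : Real.sqrt S * Real.sqrt T ≤ 1 - a^2*b^2 - c^2*d^2 := by
    nlinarith [sq_nonneg (Real.sqrt S - Real.sqrt T)]
  have h1 : (a * b - c * d) ^ 2 / Real.sqrt S ≤
      gam4 n * (perp m ⬝ᵥ (Z4 n).mulVec (perp m)) - gam4 m ^ 2 := by
    rw [key, hm2, div_le_iff₀ hsS, sub_mul, div_mul_cancel₀ _ (ne_of_gt hsS)]
    have hq : (a*b-c*d)^2 = a^2*b^2 + c^2*d^2 - 2*(a*b*c*d) := by ring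
    have hcomm : Real.sqrt T * Real.sqrt S = Real.sqrt S * Real.sqrt T := mul_comm _ _
    linarith [hst]
  refine ⟨h1, ?_⟩
  have h2 : 0 ≤ (a * b - c * d) ^ 2 / Real.sqrt S := by positivity
  linarith
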